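/- arXiv:2407.09390 — 2 statements merged into one kernel-verified Lean document; each statement's English description precedes it below -/
import Mathlib

section
/- Fix ε ∈ (0,1), τ > 0, ω > 0, and define the truncation ψ_τ(x) = sign(x)·min(|x|, τ) for x ∈ ℝ. Let X_1, …, X_n be random vectors in ℝ^p with max_{i∈[p]} max_{t∈[n]} E|X_{it}|^{2+2ε} ≤ ω^{2+2ε}. Let ψ_τ(X_t) denote the vector with entries ψ_τ(X_{it}), and define the p×p bias matrix B = (1/n)·Σ_{t=1}^n ( E[ψ_τ(X_t)·ψ_τ(X_t)ᵀ] − E[X_t·X_tᵀ] ). Then every entry of B satisfies |B_{ij}| ≤ 2·ω^{2+2ε}·τ^{−2ε}, and consequently the Frobenius norm satisfies ‖B‖_F ≤ 2·p·ω^{2+2ε}·τ^{−2ε}. -/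
/-! Writing `x = sign x · |x|`, the product `ψ_τ(x) ψ_τ(y)` differs from `x y` by at most
`|x| |y| - min(|x|, τ) min(|y|, τ)`. This vanishes unless `m = max(|x|, |y|) > τ`, and then
`|x| |y| ≤ m² ≤ τ^{-2ε} m^{2+2ε}`. Integrating bounds each summand of `B_{ij}` by
`τ^{-2ε} (ω^{2+2ε} + ω^{2+2ε})`, averaging over `t` preserves the bound, and the Frobenius norm
of a `p × p` matrix is at most `p` times its largest entry. -/

open MeasureTheory

/-- Truncation operator: `ψ_τ(x) = sign(x) · min(|x|, τ)`. -/
noncomputable def trunc (τ x : ℝ) : ℝ := Real.sign x * min |x| τ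

theorem Real.sign_mul_abs (x : ℝ) : Real.sign x * |x| = x := by
  rcases lt_trichotomy x 0 with hx | rfl | hx
  · rw [Real.sign_of_neg hx, abs_of_neg hx]; ring
  · simp
  · rw [Real.sign_of_pos hx, abs_of_pos hx, one_mul]

theorem Real.abs_sign_le_one (x : ℝ) : |Real.sign x| ≤ 1 := by
  rcases Real.sign_apply_eq x with h | h | h <;> simp [h]

theorem trunc_eq_max_min {τ : ℝ} (hτ : 0 ≤ τ) (x : ℝ) : trunc τ x = max (-τ) (min x τ) := by
  rcases lt_trichotomy x 0 with hx | rfl | hx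
  · rw [trunc, Real.sign_of_neg hx, abs_of_neg hx, min_eq_left (by linarith : x ≤ τ),
      neg_one_mul, ← max_neg_neg, neg_neg, max_comm]
  · simp [trunc, hτ]
  · rw [trunc, Real.sign_of_pos hx, abs_of_pos hx, one_mul,
      max_eq_right (le_min (by linarith) (by linarith))]

theorem measurable_trunc {τ : ℝ} (hτ : 0 ≤ τ) : Measurable (trunc τ) := by
  rw [funext (trunc_eq_max_min hτ)]
  fun_prop

theorem abs_trunc_le {τ : ℝ} (hτ : 0 ≤ τ) (x : ℝ) : |trunc τ x| ≤ τ := by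
  rw [trunc_eq_max_min hτ]
  exact abs_le.2 ⟨le_max_left _ _, max_le (by linarith) (min_le_right _ _)⟩

theorem abs_trunc_mul_trunc_sub_mul_le {τ : ℝ} (hτ : 0 ≤ τ) (x y : ℝ) :
    |trunc τ x * trunc τ y - x * y| ≤ |x| * |y| - min |x| τ * min |y| τ := by
  have hmin : min |x| τ * min |y| τ ≤ |x| * |y| :=
    mul_le_mul (min_le_left _ _) (min_le_left _ _) (le_min (abs_nonneg y) hτ) (abs_nonneg x)
  have hsign : |Real.sign x * Real.sign y| ≤ 1 := by
    rw [abs_mul]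
    exact mul_le_one₀ (Real.abs_sign_le_one x) (abs_nonneg _) (Real.abs_sign_le_one y)
  calc |trunc τ x * trunc τ y - x * y|
      = |Real.sign x * Real.sign y| * (|x| * |y| - min |x| τ * min |y| τ) := by
        have hxy : x * y = Real.sign x * |x| * (Real.sign y * |y|) := by
          rw [Real.sign_mul_abs, Real.sign_mul_abs]
        rw [trunc, trunc, hxy, abs_sub_comm, ← abs_of_nonneg (sub_nonneg.2 hmin), ← abs_mul]
        ring_nf
    _ ≤ |x| * |y| - min |x| τ * min |y| τ :=
        mul_le_of_le_one_left (sub_nonneg.2 hmin) hsign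

theorem Real.rpow_le_rpow_neg_mul_rpow_add {τ m r s : ℝ} (hτ : 0 < τ) (hτm : τ ≤ m)
    (hs : 0 ≤ s) : m ^ r ≤ τ ^ (-s) * m ^ (r + s) := by
  have hm : 0 < m := hτ.trans_le hτm
  calc m ^ r = τ ^ (-s) * (m ^ r * τ ^ s) := by
        rw [Real.rpow_neg hτ.le]
        field_simp
    _ ≤ τ ^ (-s) * (m ^ r * m ^ s) := by gcongr
    _ = τ ^ (-s) * m ^ (r + s) := by rw [Real.rpow_add hm]

theorem mul_sub_min_mul_min_le {τ s a b : ℝ} (hτ : 0 < τ) (hs : 0 ≤ s) (ha : 0 ≤ a)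
    (hb : 0 ≤ b) : a * b - min a τ * min b τ ≤ τ ^ (-s) * (a ^ (2 + s) + b ^ (2 + s)) := by
  wlog hab : a ≤ b generalizing a b
  · rw [mul_comm a, mul_comm (min a τ), add_comm (a ^ _)]
    exact this hb ha (le_of_not_ge hab)
  have hmin : 0 ≤ min a τ * min b τ := mul_nonneg (le_min ha hτ.le) (le_min hb hτ.le)
  rcases le_or_gt b τ with hbτ | hτb
  · rw [min_eq_left (hab.trans hbτ), min_eq_left hbτ, sub_self]
    positivity
  calc a * b - min a τ * min b τ ≤ b ^ (2 : ℝ) := by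
        rw [Real.rpow_two]
        nlinarith
    _ ≤ τ ^ (-s) * b ^ (2 + s) := Real.rpow_le_rpow_neg_mul_rpow_add hτ hτb.le hs
    _ ≤ τ ^ (-s) * (a ^ (2 + s) + b ^ (2 + s)) := by
        gcongr
        exact le_add_of_nonneg_left (by positivity)

theorem abs_trunc_mul_trunc_sub_mul_le_rpow {τ s : ℝ} (hτ : 0 < τ) (hs : 0 ≤ s) (x y : ℝ) :
    |trunc τ x * trunc τ y - x * y| ≤ τ ^ (-s) * (|x| ^ (2 + s) + |y| ^ (2 + s)) :=
  (abs_trunc_mul_trunc_sub_mul_le hτ.le x y).trans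
    (mul_sub_min_mul_min_le hτ hs (abs_nonneg x) (abs_nonneg y))

theorem abs_integral_trunc_mul_trunc_sub_le {Ω : Type*} [MeasurableSpace Ω] (μ : Measure Ω)
    [IsFiniteMeasure μ] {τ s : ℝ} (hτ : 0 < τ) (hs : 0 ≤ s) {f g : Ω → ℝ}
    (hf : Measurable f) (hg : Measurable g)
    (hf_int : Integrable (fun a => |f a| ^ (2 + s)) μ)
    (hg_int : Integrable (fun a => |g a| ^ (2 + s)) μ)
    (hfg_int : Integrable (fun a => f a * g a) μ) :
    |(∫ a, trunc τ (f a) * trunc τ (g a) ∂μ) - ∫ a, f a * g a ∂μ|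
      ≤ τ ^ (-s) * ((∫ a, |f a| ^ (2 + s) ∂μ) + ∫ a, |g a| ^ (2 + s) ∂μ) := by
  have htrunc_int : Integrable (fun a => trunc τ (f a) * trunc τ (g a)) μ := by
    refine Integrable.mono' (integrable_const (τ * τ))
      ((measurable_trunc hτ.le).comp hf |>.mul ((measurable_trunc hτ.le).comp hg)
        |>.aestronglyMeasurable) (Filter.Eventually.of_forall fun a => ?_)
    rw [Real.norm_eq_abs, abs_mul]
    exact mul_le_mul (abs_trunc_le hτ.le _) (abs_trunc_le hτ.le _) (abs_nonneg _) hτ.le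
  calc |(∫ a, trunc τ (f a) * trunc τ (g a) ∂μ) - ∫ a, f a * g a ∂μ|
      = |∫ a, (trunc τ (f a) * trunc τ (g a) - f a * g a) ∂μ| := by
        rw [integral_sub htrunc_int hfg_int]
    _ ≤ ∫ a, |trunc τ (f a) * trunc τ (g a) - f a * g a| ∂μ := abs_integral_le_integral_abs
    _ ≤ ∫ a, τ ^ (-s) * (|f a| ^ (2 + s) + |g a| ^ (2 + s)) ∂μ :=
        integral_mono (htrunc_int.sub hfg_int).abs ((hf_int.add hg_int).const_mul _)
          fun a => abs_trunc_mul_trunc_sub_mul_le_rpow hτ hs _ _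
    _ = τ ^ (-s) * ((∫ a, |f a| ^ (2 + s) ∂μ) + ∫ a, |g a| ^ (2 + s) ∂μ) := by
        rw [integral_const_mul, integral_add hf_int hg_int]

theorem abs_one_div_mul_sum_le {n : ℕ} {c : Fin n → ℝ} {M : ℝ} (hM : 0 ≤ M)
    (hc : ∀ t, |c t| ≤ M) : |1 / (n : ℝ) * ∑ t, c t| ≤ M := by
  rcases n.eq_zero_or_pos with rfl | hn
  · simpa using hM
  rw [abs_mul, abs_of_pos (by positivity), one_div_mul_eq_div, div_le_iff₀ (by positivity)]
  calc |∑ t, c t| ≤ ∑ t, |c t| := Finset.abs_sum_le_sum_abs _ _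
    _ ≤ ∑ _t : Fin n, M := Finset.sum_le_sum fun t _ => hc t
    _ = M * n := by simp [mul_comm]

theorem Matrix.sqrt_sum_sum_sq_le {m : Type*} [Fintype m] {B : Matrix m m ℝ} {M : ℝ}
    (hM : 0 ≤ M) (hB : ∀ i j, |B i j| ≤ M) :
    √(∑ i, ∑ j, B i j ^ 2) ≤ Fintype.card m * M := by
  rw [Real.sqrt_le_left (by positivity)]
  calc ∑ i, ∑ j, B i j ^ 2 ≤ ∑ _i : m, ∑ _j : m, M ^ 2 :=
        Finset.sum_le_sum fun i _ => Finset.sum_le_sum fun j _ =>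
          sq_le_sq' (abs_le.1 (hB i j)).1 (abs_le.1 (hB i j)).2
    _ = (Fintype.card m * M) ^ 2 := by simp; ring

theorem truncated_second_moment_matrix_bias_general
    {Ω : Type*} [MeasurableSpace Ω] (μ : Measure Ω) [IsProbabilityMeasure μ]
    {n p : ℕ}
    (ε τ ω : ℝ) (hε0 : 0 < ε) (hτ : 0 < τ) (hω : 0 < ω)
    (X : Fin n → Fin p → Ω → ℝ)
    (hmeas : ∀ t i, Measurable (X t i))
    (hint : ∀ t i, Integrable (fun a => |X t i a| ^ (2 + 2 * ε)) μ)
    (hintprod : ∀ t i j, Integrable (fun a => X t i a * X t j a) μ)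
    (hmom : ∀ t i, ∫ a, |X t i a| ^ (2 + 2 * ε) ∂μ ≤ ω ^ (2 + 2 * ε))
    (B : Matrix (Fin p) (Fin p) ℝ)
    (hB : ∀ i j, B i j = (1 / (n : ℝ)) * ∑ t : Fin n,
        ((∫ a, trunc τ (X t i a) * trunc τ (X t j a) ∂μ) - ∫ a, X t i a * X t j a ∂μ)) :
    (∀ i j, |B i j| ≤ 2 * ω ^ (2 + 2 * ε) * τ ^ (-(2 * ε)))
    ∧ Real.sqrt (∑ i : Fin p, ∑ j : Fin p, (B i j) ^ 2)
        ≤ 2 * (p : ℝ) * ω ^ (2 + 2 * ε) * τ ^ (-(2 * ε)) := by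
  have hM : 0 ≤ 2 * ω ^ (2 + 2 * ε) * τ ^ (-(2 * ε)) := by positivity
  have hentry : ∀ i j, |B i j| ≤ 2 * ω ^ (2 + 2 * ε) * τ ^ (-(2 * ε)) := by
    intro i j
    rw [hB i j]
    refine abs_one_div_mul_sum_le hM fun t => ?_
    calc _ ≤ τ ^ (-(2 * ε)) * ((∫ a, |X t i a| ^ (2 + 2 * ε) ∂μ)
            + ∫ a, |X t j a| ^ (2 + 2 * ε) ∂μ) :=
          abs_integral_trunc_mul_trunc_sub_le μ hτ (by positivity) (hmeas t i) (hmeas t j)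
            (hint t i) (hint t j) (hintprod t i j)
      _ ≤ τ ^ (-(2 * ε)) * (ω ^ (2 + 2 * ε) + ω ^ (2 + 2 * ε)) := by
          gcongr
          exacts [hmom t i, hmom t j]
      _ = 2 * ω ^ (2 + 2 * ε) * τ ^ (-(2 * ε)) := by ring
  refine ⟨hentry, ?_⟩
  calc √(∑ i, ∑ j, B i j ^ 2) ≤ Fintype.card (Fin p) * (2 * ω ^ (2 + 2 * ε) * τ ^ (-(2 * ε))) :=
        Matrix.sqrt_sum_sum_sq_le hM hentry
    _ = 2 * (p : ℝ) * ω ^ (2 + 2 * ε) * τ ^ (-(2 * ε)) := by rw [Fintype.card_fin]; ring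

/-- Entrywise and Frobenius-norm bound on the bias of the truncated second-moment
matrix (the term `T_{1,ij}` in the proof of Proposition B.2): if
`max_{i,t} E|X_{it}|^{2+2ε} ≤ ω^{2+2ε}`, then the bias matrix
`B = (1/n) Σ_t (E[ψ_τ(X_t)ψ_τ(X_t)ᵀ] − E[X_t X_tᵀ])` satisfies
`|B_{ij}| ≤ 2 ω^{2+2ε} τ^{−2ε}` entrywise, so `‖B‖_F ≤ 2 p ω^{2+2ε} τ^{−2ε}`. -/
theorem truncated_second_moment_matrix_bias
    {Ω : Type*} [MeasurableSpace Ω] (μ : Measure Ω) [IsProbabilityMeasure μ]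
    {n p : ℕ} (hn : 0 < n)
    (ε τ ω : ℝ) (hε0 : 0 < ε) (hε1 : ε < 1) (hτ : 0 < τ) (hω : 0 < ω)
    (X : Fin n → Fin p → Ω → ℝ)
    (hmeas : ∀ t i, Measurable (X t i))
    (hint : ∀ t i, Integrable (fun a => |X t i a| ^ (2 + 2 * ε)) μ)
    (hintprod : ∀ t i j, Integrable (fun a => X t i a * X t j a) μ)
    (hmom : ∀ t i, ∫ a, |X t i a| ^ (2 + 2 * ε) ∂μ ≤ ω ^ (2 + 2 * ε))
    (B : Matrix (Fin p) (Fin p) ℝ)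
    (hB : ∀ i j, B i j = (1 / (n : ℝ)) * ∑ t : Fin n,
        ((∫ a, trunc τ (X t i a) * trunc τ (X t j a) ∂μ) - ∫ a, X t i a * X t j a ∂μ)) :
    (∀ i j, |B i j| ≤ 2 * ω ^ (2 + 2 * ε) * τ ^ (-(2 * ε)))
    ∧ Real.sqrt (∑ i : Fin p, ∑ j : Fin p, (B i j) ^ 2)
        ≤ 2 * (p : ℝ) * ω ^ (2 + 2 * ε) * τ ^ (-(2 * ε)) :=
  truncated_second_moment_matrix_bias_general μ ε τ ω hε0 hτ hω X hmeas hint hintprod hmom B hB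
end

section
/- Let A_t ∈ ℝ^{m×q} for t = 1, …, n be a sequence of matrices with entries a_{ij,t}, let B ∈ ℝ^{q×s} be a matrix, and let C_t ∈ ℝ^{s×u} for t = 1, …, n be a sequence of matrices. Then ‖ Σ_{t=1}^n A_t B C_t ‖_F² ≤ ( Σ_{i=1}^m Σ_{j=1}^q ‖ Σ_{t=1}^n a_{ij,t} C_t ‖_F² ) · ‖B‖_F². -/
/-! Each entry of `∑ₜ Aₜ B Cₜ` is the pairing `∑_{j,l} Dᵢⱼ(l,k) B_{jl}` of `B` with the entries of
`Dᵢⱼ = ∑ₜ a_{ij,t} Cₜ`, so Cauchy–Schwarz over the index pairs `(j, l)` bounds its square by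
`(∑_{j,l} Dᵢⱼ(l,k)²) ‖B‖_F²`; summing over `(i, k)` gives the claim. -/

open Finset

theorem Finset.sum_sum_mul_sq_le_sq_mul_sq {R α β : Type*} [CommSemiring R] [LinearOrder R]
    [IsStrictOrderedRing R] [ExistsAddOfLE R] [Fintype α] [Fintype β] (f g : α → β → R) :
    (∑ a, ∑ b, f a b * g a b) ^ 2 ≤ (∑ a, ∑ b, f a b ^ 2) * ∑ a, ∑ b, g a b ^ 2 := by
  simpa only [Fintype.sum_prod_type] using
    sum_mul_sq_le_sq_mul_sq univ (fun p : α × β ↦ f p.1 p.2) fun p ↦ g p.1 p.2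

namespace Matrix

variable {R ι m q s u : Type*} [CommSemiring R] [Fintype ι] [Fintype q] [Fintype s]

theorem sum_mul_mul_apply (A : ι → Matrix m q R) (B : Matrix q s R) (C : ι → Matrix s u R)
    (i : m) (k : u) :
    (∑ t, A t * B * C t) i k = ∑ j, ∑ l, (∑ t, A t i j • C t) l k * B j l := by
  simp only [sum_apply, mul_apply, smul_apply, smul_eq_mul, sum_mul]
  rw [sum_comm, sum_comm (s := univ (α := q))]
  refine sum_congr rfl fun l _ ↦ ?_
  rw [sum_comm]
  exact sum_congr rfl fun j _ ↦ sum_congr rfl fun t _ ↦ by ring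

end Matrix

/-- Lemma B.13: for matrices `A_t ∈ ℝ^{m×q}`, `B ∈ ℝ^{q×s}`, `C_t ∈ ℝ^{s×u}`,
`‖Σ_t A_t B C_t‖_F² ≤ (Σ_{i,j} ‖Σ_t a_{ij,t} C_t‖_F²) · ‖B‖_F²`. -/
theorem frobenius_sum_product_bound
    {n m q s u : ℕ}
    (A : Fin n → Matrix (Fin m) (Fin q) ℝ)
    (B : Matrix (Fin q) (Fin s) ℝ)
    (C : Fin n → Matrix (Fin s) (Fin u) ℝ) :
    (∑ i : Fin m, ∑ k : Fin u, ((∑ t : Fin n, A t * B * C t) i k) ^ 2)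
      ≤ (∑ i : Fin m, ∑ j : Fin q,
          ∑ l : Fin s, ∑ k : Fin u, ((∑ t : Fin n, A t i j • C t) l k) ^ 2) *
        ∑ j : Fin q, ∑ l : Fin s, (B j l) ^ 2 := by
  set D := fun i j ↦ ∑ t, A t i j • C t
  have entry_sq_le (i k) : ((∑ t, A t * B * C t) i k) ^ 2
      ≤ (∑ j, ∑ l, (D i j l k) ^ 2) * ∑ j, ∑ l, (B j l) ^ 2 := by
    rw [Matrix.sum_mul_mul_apply]
    exact sum_sum_mul_sq_le_sq_mul_sq _ _
  calc (∑ i, ∑ k, ((∑ t, A t * B * C t) i k) ^ 2)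
      ≤ ∑ i, ∑ k, (∑ j, ∑ l, (D i j l k) ^ 2) * ∑ j, ∑ l, (B j l) ^ 2 :=
        sum_le_sum fun i _ ↦ sum_le_sum fun k _ ↦ entry_sq_le i k
    _ = (∑ i, ∑ j, ∑ l, ∑ k, (D i j l k) ^ 2) * ∑ j, ∑ l, (B j l) ^ 2 := by
        simp only [← sum_mul]
        congr 1
        refine sum_congr rfl fun i _ ↦ ?_
        rw [sum_comm]
        exact sum_congr rfl fun j _ ↦ sum_comm
end
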